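/- arXiv:1908.03321 — 3 statements merged into one kernel-verified Lean document; each statement's English description precedes it below -/
import Mathlib

section
/- Let G be a finite p-group in which every element of the quotient G/G^p has a lift to an element of G of order dividing p (where G^p is the subgroup generated by p-th powers of elements of G). Then G^p = 1, i.e., G has exponent dividing p. -/
/-!
Induct on `|G|`. A nontrivial `p`-group has a central subgroup `Z` of order `p`, and the
hypothesis passes to `G ⧸ Z`, so by induction `(G ⧸ Z)^p = 1`, i.e. `G^p ≤ Z`. Now write any
`g` as `h m⁻¹` with `h^p = 1` and `m ∈ G^p`; since `m` is central of order dividing `p`,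
`g^p = h^p m^{-p} = 1`.
-/

open Subgroup

namespace Subgroup

variable {G H : Type*} [Group G] [Group H]

theorem normal_of_le_center {K : Subgroup G} (hK : K ≤ center G) : K.Normal where
  conj_mem k hk g := by
    rwa [mem_center_iff.mp (hK hk) g, mul_inv_cancel_right]

variable (G) in
/-- The subgroup `G^p`. -/
def powClosure (p : ℕ) : Subgroup G :=
  closure {x : G | ∃ g : G, x = g ^ p}

theorem powClosure_eq_bot_iff {p : ℕ} : powClosure G p = ⊥ ↔ ∀ g : G, g ^ p = 1 := by
  simp [powClosure, closure_eq_bot_iff, Set.subset_def]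

theorem map_powClosure_le (f : G →* H) (p : ℕ) : (powClosure G p).map f ≤ powClosure H p := by
  rw [powClosure, MonoidHom.map_closure]
  refine closure_mono ?_
  rintro _ ⟨_, ⟨g, rfl⟩, rfl⟩
  exact ⟨f g, map_pow f g p⟩

end Subgroup

/-- The map `G[p] → G ⧸ G^p` is surjective. -/
def HasTorsionLifts (p : ℕ) (G : Type*) [Group G] : Prop :=
  ∀ g : G, ∃ h : G, h ^ p = 1 ∧ g⁻¹ * h ∈ powClosure G p

section

variable {G H : Type*} [Group G] [Group H]

namespace HasTorsionLifts

variable {p : ℕ}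

theorem of_surjective (hG : HasTorsionLifts p G) (f : G →* H) (hf : Function.Surjective f) :
    HasTorsionLifts p H := by
  intro x
  obtain ⟨g, rfl⟩ := hf x
  obtain ⟨h, hhp, hgh⟩ := hG g
  refine ⟨f h, by rw [← map_pow, hhp, map_one], map_powClosure_le f p ?_⟩
  simpa using mem_map_of_mem f hgh

theorem powClosure_eq_bot_of_le_center (hG : HasTorsionLifts p G)
    (hcenter : powClosure G p ≤ center G) (hexp : ∀ m ∈ powClosure G p, m ^ p = 1) :
    powClosure G p = ⊥ := by
  refine powClosure_eq_bot_iff.mpr fun g => ?_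
  obtain ⟨h, hhp, hm⟩ := hG g
  have hcomm : Commute h (g⁻¹ * h)⁻¹ := Commute.inv_right (mem_center_iff.mp (hcenter hm) h)
  calc g ^ p = (h * (g⁻¹ * h)⁻¹) ^ p := by group
    _ = 1 := by rw [hcomm.mul_pow, hhp, inv_pow, hexp _ hm, one_mul, inv_one]

end HasTorsionLifts

theorem IsPGroup.exists_orderOf_eq_mem_center {p : ℕ} [Fact p.Prime] [Finite G] [Nontrivial G]
    (hG : IsPGroup p G) : ∃ z ∈ center G, orderOf z = p := by
  have : Nontrivial (center G) := hG.center_nontrivial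
  obtain ⟨n, hn, hcard⟩ := (hG.to_subgroup (center G)).nontrivial_iff_card.mp this
  obtain ⟨z, hz⟩ := exists_prime_orderOf_dvd_card' p (hcard ▸ dvd_pow_self p hn.ne')
  exact ⟨z, z.2, by rw [← hz, orderOf_coe]⟩

end

theorem pGroup_exponent_p_of_lifts (p : ℕ) [Fact p.Prime]
    (G : Type*) [Group G] [Finite G] (hG : IsPGroup p G)
    (hlift : ∀ g : G, ∃ h : G, h ^ p = 1 ∧
      g⁻¹ * h ∈ Subgroup.closure {x : G | ∃ g' : G, x = g' ^ p}) :
    Subgroup.closure {x : G | ∃ g' : G, x = g' ^ p} = ⊥ := by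
  induction hn : Nat.card G using Nat.strong_induction_on generalizing G with
  | _ n ih =>
  rcases subsingleton_or_nontrivial G with _ | _
  · exact Subsingleton.elim _ _
  obtain ⟨z, hz, hzp⟩ := hG.exists_orderOf_eq_mem_center
  have hZ : zpowers z ≤ center G := zpowers_le.mpr hz
  have := normal_of_le_center hZ
  have hcard : Nat.card (G ⧸ zpowers z) < n := by
    rw [← hn, ← index_eq_card, ← (zpowers z).index_mul_card, Nat.card_zpowers, hzp]
    exact lt_mul_of_one_lt_right (Nat.pos_of_ne_zero index_ne_zero_of_finite)
      (Fact.out : p.Prime).one_lt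
  have hquot : powClosure (G ⧸ zpowers z) p = ⊥ :=
    ih _ hcard (G ⧸ zpowers z) (hG.to_quotient _)
      (HasTorsionLifts.of_surjective hlift _ (QuotientGroup.mk'_surjective _)) rfl
  have hle : powClosure G p ≤ zpowers z := by
    rw [← QuotientGroup.ker_mk' (zpowers z), ← MonoidHom.comap_bot, ← map_le_iff_le_comap,
      ← hquot]
    exact map_powClosure_le _ p
  exact HasTorsionLifts.powClosure_eq_bot_of_le_center hlift (hle.trans hZ) fun m hm =>
    orderOf_dvd_iff_pow_eq_one.mp (hzp ▸ orderOf_dvd_of_mem_zpowers (hle hm))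
end

section
/- Let G be a finite 2-group such that every element of the quotient G/G⁴ has a lift to an element of G of order dividing 4, where G⁴ is the subgroup generated by fourth powers. Then G⁴ = 1, i.e., G has exponent dividing 4. -/
open Subgroup

lemma aux : ∀ (n : ℕ) (G : Type u) [Group G] [Finite G], Nat.card G ≤ n → IsPGroup 2 G →
    (∀ g : G, ∃ h : G, h ^ 4 = 1 ∧ g⁻¹ * h ∈ Subgroup.closure {x : G | ∃ g' : G, x = g' ^ 4}) →
    Subgroup.closure {x : G | ∃ g' : G, x = g' ^ 4} = ⊥ := by
  intro n
  induction n with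
  | zero => intro G _ _ hc _ _; exact absurd hc (by simpa using Nat.card_pos.ne')
  | succ n ih =>
    intro G _ _ hc hG hlift
    rcases subsingleton_or_nontrivial G with hs | hnt
    · refine le_bot_iff.mp ((Subgroup.closure_le _).mpr ?_)
      intro x _
      simp [Subgroup.mem_bot, Subsingleton.elim x 1]
    · -- find central element of order 2
      have : Nontrivial (Subgroup.center G) := IsPGroup.center_nontrivial hG
      obtain ⟨⟨z, hzc⟩, hzne⟩ := exists_ne (1 : Subgroup.center G)
      have hz1 : z ≠ 1 := fun h => hzne (Subtype.ext h)
      obtain ⟨k, hk⟩ := hG z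
      have hdvd : orderOf z ∣ 2 ^ k := orderOf_dvd_of_pow_eq_one hk
      obtain ⟨i, hi, hio⟩ := (Nat.dvd_prime_pow Nat.prime_two).mp hdvd
      have hipos : 0 < i := by
        rcases Nat.eq_zero_or_pos i with h0 | h
        · exact absurd (orderOf_eq_one_iff.mp (by simp [hio, h0])) hz1
        · exact h
      set z' : G := z ^ (2 ^ (i - 1)) with hz'def
      have hz'c : z' ∈ Subgroup.center G := Subgroup.pow_mem _ hzc _
      have hz'sq : z' ^ 2 = 1 := by
        rw [hz'def, ← pow_mul, ← pow_succ, Nat.sub_add_cancel hipos, ← hio]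
        exact pow_orderOf_eq_one z
      have hz'ne : z' ≠ 1 := by
        intro h
        have hd := orderOf_dvd_of_pow_eq_one (n := 2 ^ (i-1)) h
        rw [hio] at hd
        have h2 : 2 ^ i ≤ 2 ^ (i - 1) :=
          Nat.le_of_dvd (Nat.pow_pos (by norm_num)) hd
        have := Nat.pow_lt_pow_right (by norm_num : 1 < 2) (Nat.sub_lt hipos one_pos)
        omega
      set Z := Subgroup.zpowers z' with hZdef
      have hcomm : ∀ x ∈ Z, ∀ y : G, x * y = y * x := by
        intro x hx y
        obtain ⟨m, rfl⟩ := hx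
        have h1 : Commute y z' := Subgroup.mem_center_iff.mp hz'c y
        exact (h1.symm.zpow_left m).eq
      have hZnormal : Z.Normal := by
        constructor
        intro x hx g
        rw [← hcomm x hx g, mul_assoc, mul_inv_cancel, mul_one]
        exact hx
      -- quotient
      let f : G →* G ⧸ Z := QuotientGroup.mk' Z
      have hfsurj : Function.Surjective f := QuotientGroup.mk'_surjective Z
      have hQp : IsPGroup 2 (G ⧸ Z) := hG.to_quotient Z
      have hcardZ : Nat.card Z = 2 := by
        rw [Nat.card_zpowers, orderOf_eq_prime hz'sq hz'ne]
      have hcardQ : Nat.card (G ⧸ Z) ≤ n := by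
        have h1 : Nat.card G = Nat.card (G ⧸ Z) * Nat.card Z :=
          Subgroup.card_eq_card_quotient_mul_card_subgroup Z
        have h2 : 0 < Nat.card (G ⧸ Z) := Nat.card_pos
        rw [hcardZ] at h1
        omega
      have hliftQ : ∀ q : G ⧸ Z, ∃ h : G ⧸ Z, h ^ 4 = 1 ∧
          q⁻¹ * h ∈ Subgroup.closure {x : G ⧸ Z | ∃ g' : G ⧸ Z, x = g' ^ 4} := by
        intro q
        obtain ⟨g, rfl⟩ := hfsurj q
        obtain ⟨h, hh4, hmem⟩ := hlift g
        refine ⟨f h, by rw [← map_pow, hh4, map_one], ?_⟩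
        have : f (g⁻¹ * h) ∈ (Subgroup.closure {x : G | ∃ g' : G, x = g' ^ 4}).map f :=
          Subgroup.mem_map_of_mem f hmem
        rw [MonoidHom.map_closure] at this
        rw [← map_inv, ← map_mul]
        refine Subgroup.closure_mono ?_ this
        rintro _ ⟨x, ⟨g', rfl⟩, rfl⟩
        exact ⟨f g', by rw [map_pow]⟩
      have hQbot := ih (G ⧸ Z) hcardQ hQp hliftQ
      -- hence closure S ≤ ker f = Z
      have hNle : Subgroup.closure {x : G | ∃ g' : G, x = g' ^ 4} ≤ Z := by
        have hmap : (Subgroup.closure {x : G | ∃ g' : G, x = g' ^ 4}).map f = ⊥ := by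
          rw [MonoidHom.map_closure]
          rw [← le_bot_iff, ← hQbot]
          refine Subgroup.closure_mono ?_
          rintro _ ⟨x, ⟨g', rfl⟩, rfl⟩
          exact ⟨f g', by rw [map_pow]⟩
        have := (Subgroup.map_eq_bot_iff _).mp hmap
        rwa [QuotientGroup.ker_mk'] at this
      -- now every g^4 = 1
      have hpow : ∀ g : G, g ^ 4 = 1 := by
        intro g
        obtain ⟨h, hh4, hmem⟩ := hlift g
        have hmemZ : g⁻¹ * h ∈ Z := hNle hmem
        set m : G := g⁻¹ * h with hm
        have hg : g = h * m⁻¹ := by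
          rw [hm]; group
        have hmsq : m ^ 2 = 1 := by
          obtain ⟨j, hj⟩ := hmemZ
          rw [← hj, ← zpow_natCast, ← zpow_mul, mul_comm, zpow_mul, zpow_natCast, hz'sq,
            one_zpow]
        have hcmh : Commute h m⁻¹ := by
          have hcm : Commute m h := hcomm m hmemZ h
          exact hcm.symm.inv_right
        rw [hg, hcmh.mul_pow, hh4, one_mul, inv_pow,
          show (4 : ℕ) = 2 * 2 by norm_num, pow_mul, hmsq, one_pow, inv_one]
      refine le_bot_iff.mp ((Subgroup.closure_le _).mpr ?_)
      rintro x ⟨g', rfl⟩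
      simp [Subgroup.mem_bot, hpow g']

theorem twoGroup_exponent_four_of_lifts
    (G : Type*) [Group G] [Finite G] (hG : IsPGroup 2 G)
    (hlift : ∀ g : G, ∃ h : G, h ^ 4 = 1 ∧
      g⁻¹ * h ∈ Subgroup.closure {x : G | ∃ g' : G, x = g' ^ 4}) :
    Subgroup.closure {x : G | ∃ g' : G, x = g' ^ 4} = ⊥ := by
  exact aux (Nat.card G) G le_rfl hG hlift
end

section
/- Let F be an algebraically closed field of characteristic 0 and let 𝔤 ⊆ 𝔰𝔩₃(F) be a selfdual Lie subalgebra (there exists invertible P with Px + xᵀP = 0 for all x ∈ 𝔤). Then the intersection 𝔤 ∩ 𝔫 of 𝔤 with the strictly upper triangular matrices has dimension at most 1. -/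
open Matrix

section helpers
variable {F : Type*} [Field F]

lemma dep2 (b1 c1 b2 c2 : F) (h : b1*c2 - b2*c1 = 0) :
    ∃ s t : F, (s ≠ 0 ∨ t ≠ 0) ∧ s*b1+t*b2 = 0 ∧ s*c1+t*c2 = 0 := by
  by_cases hb : b1 = 0
  · by_cases hc : c1 = 0
    · exact ⟨1, 0, Or.inl one_ne_zero, by simp [hb], by simp [hc]⟩
    · exact ⟨c2, -c1, Or.inr (by simpa using hc), by linear_combination h, by ring⟩
  · exact ⟨b2, -b1, Or.inr (by simpa using hb), by ring, by linear_combination -h⟩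

lemma core_a (p00 p01 p02 p10 p11 p12 p20 p21 p22 a1 b1 c1 a2 b2 c2 : F)
    (h2 : (2:F) ≠ 0)
    (hdet : p00*p11*p22 - p00*p12*p21 - p01*p10*p22 + p01*p12*p20 + p02*p10*p21
      - p02*p11*p20 ≠ 0)
    (ha1 : a1 ≠ 0)
    (u2 : b1*p00 + c1*p01 = 0) (u3 : a1*(p01+p10) = 0)
    (u4 : a1*p02 + b1*p10 + c1*p11 = 0)
    (u6 : a1*p20 + b1*p01 + c1*p11 = 0) (u7 : b1*(p20+p02) + c1*(p21+p12) = 0)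
    (w1 : a2 * p00 = 0) (v2 : b2*p00 + c2*p01 = 0)
    (v4 : a2*p02 + b2*p10 + c2*p11 = 0)
    (v7 : b2*(p20+p02) + c2*(p21+p12) = 0)
    (u1 : a1 * p00 = 0) :
    ∃ s t : F, (s ≠ 0 ∨ t ≠ 0) ∧ s*a1+t*a2 = 0 ∧ s*b1+t*b2 = 0 ∧ s*c1+t*c2 = 0 := by
  have hp00 : p00 = 0 := (mul_eq_zero.mp u1).resolve_left ha1
  have hp10 : p10 = -p01 := by
    have h3 := (mul_eq_zero.mp u3).resolve_left ha1
    linear_combination h3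
  by_cases hc : c1 = 0 ∧ c2 = 0
  · obtain ⟨hc1, hc2⟩ := hc
    by_cases hm : a1*b2 - a2*b1 = 0
    · exact ⟨a2, -a1, Or.inr (neg_ne_zero.mpr ha1), by ring, by linear_combination -hm,
        by rw [hc1, hc2]; ring⟩
    · -- derive p02 = 0, p10 = 0, p01 = 0, so first row/col structure kills det
      have hp02 : p02 = 0 := by
        have h : (a1*b2 - a2*b1) * p02 = 0 := by
          linear_combination b2*u4 - b1*v4 - (b2*p11)*hc1 + (b1*p11)*hc2
        exact (mul_eq_zero.mp h).resolve_left hm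
      have hp10' : p10 = 0 := by
        have h : (a2*b1 - a1*b2) * p10 = 0 := by
          linear_combination a2*u4 - a1*v4 - (a2*p11)*hc1 + (a1*p11)*hc2
            - (a2*a1 - a1*a2)*hp02
        have hm' : a2*b1 - a1*b2 ≠ 0 := fun h' => hm (by linear_combination -h')
        exact (mul_eq_zero.mp h).resolve_left hm'
      have hp01 : p01 = 0 := by linear_combination hp10 - hp10'
      exact absurd (by linear_combination (p11*p22 - p12*p21)*hp00
        + (p12*p20 - p10*p22)*hp01 + (p10*p21 - p11*p20)*hp02) hdet
  · have hcc : c1 ≠ 0 ∨ c2 ≠ 0 := by tauto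
    have hp01 : p01 = 0 := by
      rcases hcc with h | h
      · have : c1 * p01 = 0 := by linear_combination u2 - b1*hp00
        exact (mul_eq_zero.mp this).resolve_left h
      · have : c2 * p01 = 0 := by linear_combination v2 - b2*hp00
        exact (mul_eq_zero.mp this).resolve_left h
    have hp10' : p10 = 0 := by rw [hp10, hp01, neg_zero]
    have h4 : a1*p02 + c1*p11 = 0 := by linear_combination u4 - b1*hp10'
    have h4v : a2*p02 + c2*p11 = 0 := by linear_combination v4 - b2*hp10'
    have h6 : a1*p20 + c1*p11 = 0 := by linear_combination u6 - b1*hp01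
    have hp20 : p20 = p02 := by
      have h : a1 * (p20 - p02) = 0 := by linear_combination h6 - h4
      have := (mul_eq_zero.mp h).resolve_left ha1
      linear_combination this
    have hdet2 : p02*p02*p11 ≠ 0 := by
      intro h
      exact hdet (by linear_combination (p11*p22 - p12*p21)*hp00
        + (p12*p20 - p10*p22)*hp01 + (p02*p21)*hp10' - (p02*p11)*hp20 - h)
    have hp02 : p02 ≠ 0 := fun h => hdet2 (by rw [h]; ring)
    refine ⟨c2, -c1, ?_, ?_, ?_, by ring⟩
    · rcases hcc with h | h
      · exact Or.inr (neg_ne_zero.mpr h)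
      · exact Or.inl h
    · have h : (c2*a1 - c1*a2) * p02 = 0 := by linear_combination c2*h4 - c1*h4v
      have := (mul_eq_zero.mp h).resolve_right hp02
      linear_combination this
    · have h7u : 2*(b1*p02) + c1*(p21+p12) = 0 := by linear_combination u7 - b1*hp20
      have h7v : 2*(b2*p02) + c2*(p21+p12) = 0 := by linear_combination v7 - b2*hp20
      have h : (c2*b1 - c1*b2) * (2*p02) = 0 := by linear_combination c2*h7u - c1*h7v
      have := (mul_eq_zero.mp h).resolve_right (mul_ne_zero h2 hp02)
      linear_combination this

lemma core (p00 p01 p02 p10 p11 p12 p20 p21 p22 a1 b1 c1 a2 b2 c2 : F)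
    (h2 : (2:F) ≠ 0)
    (hdet : p00*p11*p22 - p00*p12*p21 - p01*p10*p22 + p01*p12*p20 + p02*p10*p21
      - p02*p11*p20 ≠ 0)
    (u1 : a1 * p00 = 0) (u2 : b1*p00 + c1*p01 = 0) (u3 : a1*(p01+p10) = 0)
    (u4 : a1*p02 + b1*p10 + c1*p11 = 0) (u5 : b1*p00 + c1*p10 = 0)
    (u6 : a1*p20 + b1*p01 + c1*p11 = 0) (u7 : b1*(p20+p02) + c1*(p21+p12) = 0)
    (v1 : a2 * p00 = 0) (v2 : b2*p00 + c2*p01 = 0) (v3 : a2*(p01+p10) = 0)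
    (v4 : a2*p02 + b2*p10 + c2*p11 = 0) (v5 : b2*p00 + c2*p10 = 0)
    (v6 : a2*p20 + b2*p01 + c2*p11 = 0) (v7 : b2*(p20+p02) + c2*(p21+p12) = 0) :
    ∃ s t : F, (s ≠ 0 ∨ t ≠ 0) ∧ s*a1+t*a2 = 0 ∧ s*b1+t*b2 = 0 ∧ s*c1+t*c2 = 0 := by
  by_cases ha1 : a1 = 0
  · by_cases ha2 : a2 = 0
    · by_cases hm : b1*c2 - b2*c1 = 0
      · obtain ⟨s, t, hst, hb, hc⟩ := dep2 b1 c1 b2 c2 hm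
        exact ⟨s, t, hst, by rw [ha1, ha2]; ring, hb, hc⟩
      · have hp00 : p00 = 0 := by
          have h : (b1*c2 - b2*c1) * p00 = 0 := by linear_combination c2*u2 - c1*v2
          exact (mul_eq_zero.mp h).resolve_left hm
        have hp01 : p01 = 0 := by
          have h : (b1*c2 - b2*c1) * p01 = 0 := by linear_combination b1*v2 - b2*u2
          exact (mul_eq_zero.mp h).resolve_left hm
        have hp10' : p10 = 0 := by
          have h : (b1*c2 - b2*c1) * p10 = 0 := by
            linear_combination c2*u4 - c1*v4 - (c2*p02)*ha1 + (c1*p02)*ha2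
          exact (mul_eq_zero.mp h).resolve_left hm
        have hp11 : p11 = 0 := by
          have h : (b1*c2 - b2*c1) * p11 = 0 := by
            linear_combination b1*v4 - b2*u4 + (b2*p02)*ha1 - (b1*p02)*ha2
          exact (mul_eq_zero.mp h).resolve_left hm
        exact absurd (by linear_combination (p11*p22 - p12*p21)*hp00
          + (p12*p20 - p10*p22)*hp01 + (p02*p21)*hp10' - (p02*p20)*hp11) hdet
    · obtain ⟨s, t, hst, ha, hb, hc⟩ := core_a p00 p01 p02 p10 p11 p12 p20 p21 p22
        a2 b2 c2 a1 b1 c1 h2 hdet ha2 v2 v3 v4 v6 v7 u1 u2 u4 u7 v1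
      exact ⟨t, s, hst.symm, by linear_combination ha, by linear_combination hb,
        by linear_combination hc⟩
  · obtain ⟨s, t, hst, ha, hb, hc⟩ := core_a p00 p01 p02 p10 p11 p12 p20 p21 p22
      a1 b1 c1 a2 b2 c2 h2 hdet ha1 u2 u3 u4 u6 u7 v1 v2 v4 v7 u1
    exact ⟨s, t, hst, ha, hb, hc⟩

end helpers
section helpers2

variable {F : Type*} [Field F]

lemma extract (P x : Matrix (Fin 3) (Fin 3) F) (hx : ∀ i j : Fin 3, j ≤ i → x i j = 0)
    (h : P * x + xᵀ * P = 0) :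
    x 0 1 * P 0 0 = 0 ∧ (x 0 2 * P 0 0 + x 1 2 * P 0 1 = 0) ∧
    x 0 1 * (P 0 1 + P 1 0) = 0 ∧
    (x 0 1 * P 0 2 + x 0 2 * P 1 0 + x 1 2 * P 1 1 = 0) ∧
    (x 0 2 * P 0 0 + x 1 2 * P 1 0 = 0) ∧
    (x 0 1 * P 2 0 + x 0 2 * P 0 1 + x 1 2 * P 1 1 = 0) ∧
    (x 0 2 * (P 2 0 + P 0 2) + x 1 2 * (P 2 1 + P 1 2) = 0) := by
  have h00 : x 0 0 = 0 := hx 0 0 le_rfl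
  have h10 : x 1 0 = 0 := hx 1 0 (by decide)
  have h11 : x 1 1 = 0 := hx 1 1 le_rfl
  have h20 : x 2 0 = 0 := hx 2 0 (by decide)
  have h21 : x 2 1 = 0 := hx 2 1 (by decide)
  have h22 : x 2 2 = 0 := hx 2 2 le_rfl
  have e : ∀ i j : Fin 3, (∑ k, P i k * x k j) + ∑ k, x k i * P k j = 0 := by
    intro i j
    have := congrFun (congrFun h i) j
    simpa [Matrix.add_apply, Matrix.mul_apply, Matrix.transpose_apply] using this
  have e01 := e 0 1; have e02 := e 0 2; have e11 := e 1 1; have e12 := e 1 2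
  have e20 := e 2 0; have e21 := e 2 1; have e22 := e 2 2
  simp only [Fin.sum_univ_three, h00, h10, h11, h20, h21, h22, zero_mul, mul_zero,
    add_zero, zero_add] at e01 e02 e11 e12 e20 e21 e22
  refine ⟨by linear_combination e01, by linear_combination e02, by linear_combination e11,
    by linear_combination e12, by linear_combination e20, by linear_combination e21,
    by linear_combination e22⟩

end helpers2

attribute [local instance 100] LieRing.ofAssociativeRing

/-- The space `𝔫` of strictly upper triangular 3×3 matrices over `F`. -/
def strictlyUpperTriangular (F : Type*) [Field F] :
    Submodule F (Matrix (Fin 3) (Fin 3) F) where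
  carrier := {x | ∀ i j : Fin 3, j ≤ i → x i j = 0}
  add_mem' := by
    intro x y hx hy i j hij
    simp [Matrix.add_apply, hx i j hij, hy i j hij]
  zero_mem' := by intro i j hij; simp
  smul_mem' := by
    intro c x hx i j hij
    simp [Matrix.smul_apply, hx i j hij]

theorem selfdual_inter_nilpotent_dim_le_one (F : Type*) [Field F] [IsAlgClosed F] [CharZero F]
    (g : LieSubalgebra F (Matrix (Fin 3) (Fin 3) F))
    (htr : ∀ x ∈ g, Matrix.trace x = 0)
    (P : Matrix (Fin 3) (Fin 3) F) (hP : IsUnit P)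
    (hsd : ∀ x ∈ g, P * x + xᵀ * P = 0) :
    Module.finrank F ↥(g.toSubmodule ⊓ strictlyUpperTriangular F) ≤ 1 := by
  by_contra hlt
  push_neg at hlt
  obtain ⟨f, hf⟩ := exists_linearIndependent_of_le_finrank hlt
  obtain ⟨hxg, hxn⟩ := Submodule.mem_inf.mp (f 0).2
  obtain ⟨hyg, hyn⟩ := Submodule.mem_inf.mp (f 1).2
  set x : Matrix (Fin 3) (Fin 3) F := ((f 0 : _) : Matrix (Fin 3) (Fin 3) F) with hxdef
  set y : Matrix (Fin 3) (Fin 3) F := ((f 1 : _) : Matrix (Fin 3) (Fin 3) F) with hydef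
  have hxn' : ∀ i j : Fin 3, j ≤ i → x i j = 0 := hxn
  have hyn' : ∀ i j : Fin 3, j ≤ i → y i j = 0 := hyn
  have hEx := extract P x hxn' (hsd x hxg)
  have hEy := extract P y hyn' (hsd y hyg)
  obtain ⟨u1, u2, u3, u4, u5, u6, u7⟩ := hEx
  obtain ⟨v1, v2, v3, v4, v5, v6, v7⟩ := hEy
  have hdet : P.det ≠ 0 := ((Matrix.isUnit_iff_isUnit_det P).mp hP).ne_zero
  rw [Matrix.det_fin_three] at hdet
  have hdet' : P 0 0 * P 1 1 * P 2 2 - P 0 0 * P 1 2 * P 2 1 - P 0 1 * P 1 0 * P 2 2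
      + P 0 1 * P 1 2 * P 2 0 + P 0 2 * P 1 0 * P 2 1 - P 0 2 * P 1 1 * P 2 0 ≠ 0 := by
    intro h; exact hdet (by linear_combination h)
  obtain ⟨s, t, hst, ea, eb, ec⟩ := core (P 0 0) (P 0 1) (P 0 2) (P 1 0) (P 1 1) (P 1 2)
    (P 2 0) (P 2 1) (P 2 2) (x 0 1) (x 0 2) (x 1 2) (y 0 1) (y 0 2) (y 1 2)
    two_ne_zero hdet' u1 u2 u3 u4 u5 u6 u7 v1 v2 v3 v4 v5 v6 v7
  have hzero : s • f 0 + t • f 1 = 0 := by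
    apply Subtype.ext
    show s • x + t • y = 0
    have hbelow : ∀ i j : Fin 3, j ≤ i → (s • x + t • y) i j = 0 := by
      intro i j hij
      simp only [Matrix.add_apply, Matrix.smul_apply, smul_eq_mul,
        hxn' i j hij, hyn' i j hij, mul_zero, add_zero]
    have h01 : (s • x + t • y) 0 1 = 0 := by
      simp only [Matrix.add_apply, Matrix.smul_apply, smul_eq_mul]; exact ea
    have h02 : (s • x + t • y) 0 2 = 0 := by
      simp only [Matrix.add_apply, Matrix.smul_apply, smul_eq_mul]; exact eb
    have h12 : (s • x + t • y) 1 2 = 0 := by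
      simp only [Matrix.add_apply, Matrix.smul_apply, smul_eq_mul]; exact ec
    ext i j
    fin_cases i <;> fin_cases j <;>
      first
        | exact h01 | exact h02 | exact h12
        | exact hbelow _ _ (by decide)
  have hsum : ∑ i : Fin 2, (![s, t] : Fin 2 → F) i • f i = 0 := by
    rw [Fin.sum_univ_two, Matrix.cons_val_zero, Matrix.cons_val_one, Matrix.cons_val_zero]
    exact hzero
  have hcoef := Fintype.linearIndependent_iff.mp hf ![s, t] hsum
  rcases hst with h | h
  · exact h (by simpa using hcoef 0)
  · exact h (by simpa using hcoef 1)
end
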